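/- Suppose λ ≥ ‖(2/n)·Xᵀε‖⋆. Then the regularized least-squares minimizer β̂ satisfies the prediction error bound (1/n)·‖X(β⋆ − β̂)‖₂² ≤ 3λ·‖β⋆‖. -/

import Mathlib

open Metric Set

noncomputable section

/-- Euclidean space `ℝ^p`. -/
abbrev E (p : ℕ) := EuclideanSpace ℝ (Fin p)

/-- Matrix-vector multiplication, valued in Euclidean space. -/
def mulVecE {n p : ℕ} (X : Matrix (Fin n) (Fin p) ℝ) (v : E p) : E n :=
  WithLp.toLp 2 (X.mulVec v)

/-- The dual norm of a norm `N` on `ℝ^p`: `‖θ‖⋆ = sup {⟨θ, β⟩ : N β ≤ 1}`. -/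
def dualOf {p : ℕ} (N : E p → ℝ) (θ : E p) : ℝ :=
  sSup ((fun β => (inner ℝ θ β : ℝ)) '' {β | N β ≤ 1})

/-!
With `Δ = β⋆ - β̂`, comparing the objective at `β̂` with its value at `β⋆` gives the basic
inequality `(1/2n)‖XΔ‖² + (1/n)⟪Δ, Xᵀε⟫ + λ‖β̂‖ ≤ λ‖β⋆‖`. The cross term is minus half of
`⟪(2/n)Xᵀε, -Δ⟫ ≤ ‖(2/n)Xᵀε‖⋆ ‖Δ‖ ≤ λ(‖β̂‖ + ‖β⋆‖)`, so `(1/2n)‖XΔ‖² ≤ (3/2)λ‖β⋆‖ - (1/2)λ‖β̂‖`.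
-/

structure IsNorm {V : Type*} [AddCommGroup V] [Module ℝ V] (N : V → ℝ) : Prop where
  add_le (x y : V) : N (x + y) ≤ N x + N y
  smul_eq (a : ℝ) (x : V) : N (a • x) = |a| * N x
  eq_zero_of_eq_zero (x : V) : N x = 0 → x = 0

namespace IsNorm

section Module

variable {V : Type*} [AddCommGroup V] [Module ℝ V] {N : V → ℝ}

def toAddGroupNorm (hN : IsNorm N) : AddGroupNorm V where
  toFun := N
  map_zero' := by simpa using hN.smul_eq 0 0
  add_le' := hN.add_le
  neg' x := by simpa using hN.smul_eq (-1) x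
  eq_zero_of_map_eq_zero' := hN.eq_zero_of_eq_zero

theorem nonneg (hN : IsNorm N) (x : V) : 0 ≤ N x :=
  apply_nonneg hN.toAddGroupNorm x

theorem sub_le (hN : IsNorm N) (x y : V) : N (x - y) ≤ N x + N y :=
  map_sub_le_add hN.toAddGroupNorm x y

def Space (_ : IsNorm N) : Type _ := V

instance (hN : IsNorm N) : NormedAddCommGroup hN.Space :=
  hN.toAddGroupNorm.toNormedAddCommGroup (E := V)

instance (hN : IsNorm N) : Module ℝ hN.Space := inferInstanceAs (Module ℝ V)

instance (hN : IsNorm N) : NormedSpace ℝ hN.Space where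
  norm_smul_le a x := (hN.smul_eq a x).le

end Module

theorem exists_norm_le_mul {V : Type*} [NormedAddCommGroup V] [NormedSpace ℝ V]
    [FiniteDimensional ℝ V] {N : V → ℝ} (hN : IsNorm N) :
    ∃ C, 0 ≤ C ∧ ∀ x, ‖x‖ ≤ C * N x := by
  have : FiniteDimensional ℝ hN.Space := inferInstanceAs (FiniteDimensional ℝ V)
  -- the identity from `(V, N)` to `V` is linear on a finite-dimensional space, hence bounded
  let i : hN.Space →ₗ[ℝ] V := LinearMap.id
  let g := LinearMap.toContinuousLinearMap i
  exact ⟨‖g‖, norm_nonneg g, g.le_opNorm⟩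

end IsNorm

theorem inner_le_dualOf_mul {p : ℕ} {N : E p → ℝ} (hN : IsNorm N) (θ β : E p) :
    inner ℝ θ β ≤ dualOf N θ * N β := by
  -- without this bound the `sSup` defining `dualOf` would be the junk value `0`
  have hbdd : BddAbove ((fun β => (inner ℝ θ β : ℝ)) '' {β | N β ≤ 1}) := by
    obtain ⟨C, hC0, hC⟩ := hN.exists_norm_le_mul
    refine ⟨‖θ‖ * C, ?_⟩
    rintro _ ⟨v, hv, rfl⟩
    calc inner ℝ θ v ≤ ‖θ‖ * ‖v‖ := real_inner_le_norm θ v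
      _ ≤ ‖θ‖ * (C * 1) := by gcongr; exact (hC v).trans (by gcongr; exact hv)
      _ = ‖θ‖ * C := by ring
  rcases (hN.nonneg β).eq_or_lt with h0 | h0
  · obtain rfl := hN.eq_zero_of_eq_zero β h0.symm
    simp [← h0]
  · have hu : N ((N β)⁻¹ • β) ≤ 1 := by
      rw [hN.smul_eq, abs_of_pos (inv_pos.2 h0), inv_mul_cancel₀ h0.ne']
    have : inner ℝ θ ((N β)⁻¹ • β) ≤ dualOf N θ := le_csSup hbdd ⟨_, hu, rfl⟩
    rwa [real_inner_smul_right, inv_mul_le_iff₀ h0, mul_comm] at this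

theorem mulVecE_eq_toEuclideanLin {n p : ℕ} (X : Matrix (Fin n) (Fin p) ℝ) :
    mulVecE X = Matrix.toEuclideanLin X := rfl

theorem mulVecE_sub {n p : ℕ} (X : Matrix (Fin n) (Fin p) ℝ) (a b : E p) :
    mulVecE X (a - b) = mulVecE X a - mulVecE X b := by
  simp only [mulVecE_eq_toEuclideanLin, map_sub]

theorem inner_mulVecE_left {n p : ℕ} (X : Matrix (Fin n) (Fin p) ℝ) (v : E p) (w : E n) :
    inner ℝ (mulVecE X v) w = inner ℝ v (mulVecE X.transpose w) := by
  rw [mulVecE_eq_toEuclideanLin, mulVecE_eq_toEuclideanLin,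
    ← Matrix.conjTranspose_eq_transpose_of_trivial,
    Matrix.toEuclideanLin_conjTranspose_eq_adjoint, LinearMap.adjoint_inner_right]

theorem prediction_error_general (n p : ℕ)
    (X : Matrix (Fin n) (Fin p) ℝ) (βstar : E p) (ε : E n)
    (N : E p → ℝ)
    (Ntriangle : ∀ x y : E p, N (x + y) ≤ N x + N y)
    (Nsmul : ∀ (a : ℝ) (x : E p), N (a • x) = |a| * N x)
    (Ndefinite : ∀ x : E p, N x = 0 → x = 0)
    (lam : ℝ) (hlam0 : 0 < lam)
    (y : E n) (hy : y = mulVecE X βstar + ε)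
    (βhat : E p)
    (hmin : ∀ β : E p,
      (1 / (2 * n) : ℝ) * ‖y - mulVecE X βhat‖ ^ 2 + lam * N βhat ≤
        (1 / (2 * n) : ℝ) * ‖y - mulVecE X β‖ ^ 2 + lam * N β)
    (hlam : lam ≥ dualOf N (((2 : ℝ) / n) • mulVecE X.transpose ε)) :
    (1 / n : ℝ) * ‖mulVecE X (βstar - βhat)‖ ^ 2 ≤ 3 * lam * N βstar := by
  have hN : IsNorm N := ⟨Ntriangle, Nsmul, Ndefinite⟩
  have hbasic := hmin βstar
  rw [show y - mulVecE X βhat = mulVecE X (βstar - βhat) + ε by rw [hy, mulVecE_sub]; abel,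
    show y - mulVecE X βstar = ε by rw [hy]; abel, norm_add_sq_real, inner_mulVecE_left]
    at hbasic
  have hcross : inner ℝ (((2 : ℝ) / n) • mulVecE X.transpose ε) (βhat - βstar) ≤
      lam * (N βhat + N βstar) :=
    calc _ ≤ dualOf N (((2 : ℝ) / n) • mulVecE X.transpose ε) * N (βhat - βstar) :=
          inner_le_dualOf_mul hN _ _
      _ ≤ lam * N (βhat - βstar) := by gcongr; exact hN.nonneg _
      _ ≤ lam * (N βhat + N βstar) := by gcongr; exact hN.sub_le _ _
  rw [real_inner_smul_left, real_inner_comm, ← neg_sub, inner_neg_left,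
    show (2 / n : ℝ) = 4 * (1 / (2 * n)) by ring] at hcross
  rw [show (1 / n : ℝ) = 2 * (1 / (2 * n)) by ring]
  linarith [mul_nonneg hlam0.le (hN.nonneg βhat)]

/-- if `λ ≥ ‖(2/n)·Xᵀε‖⋆`, the regularized least-squares minimizer `β̂`
satisfies the prediction error bound `(1/n)·‖X(β⋆ − β̂)‖₂² ≤ 3λ·‖β⋆‖`. -/
theorem prediction_error (n p : ℕ) (hn : 1 ≤ n) (hp : 1 ≤ p)
    (X : Matrix (Fin n) (Fin p) ℝ) (βstar : E p) (ε : E n)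
    (N : E p → ℝ)
    (Ntriangle : ∀ x y : E p, N (x + y) ≤ N x + N y)
    (Nsmul : ∀ (a : ℝ) (x : E p), N (a • x) = |a| * N x)
    (Ndefinite : ∀ x : E p, N x = 0 → x = 0)
    (lam : ℝ) (hlam0 : 0 < lam)
    (y : E n) (hy : y = mulVecE X βstar + ε)
    (βhat : E p)
    (hmin : ∀ β : E p,
      (1 / (2 * n) : ℝ) * ‖y - mulVecE X βhat‖ ^ 2 + lam * N βhat ≤
        (1 / (2 * n) : ℝ) * ‖y - mulVecE X β‖ ^ 2 + lam * N β)
    (hlam : lam ≥ dualOf N (((2 : ℝ) / n) • mulVecE X.transpose ε)) :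
    (1 / n : ℝ) * ‖mulVecE X (βstar - βhat)‖ ^ 2 ≤ 3 * lam * N βstar :=
  prediction_error_general n p X βstar ε N Ntriangle Nsmul Ndefinite lam hlam0 y hy βhat hmin hlam

end
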